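/- For any two vertices u, v ∈ V\R, the distance in G satisfies d_G(u,v) = min(d_{G⁻}(u,v), d⊤_uv), where G⁻ = G[V\R] is the graph with all landmarks removed and d⊤_uv is the sketch upper bound. -/

import Mathlib

open SimpleGraph

variable {V : Type}

/-- `(r, d_G(u,r))` is an entry of the path labelling `L(u)`: some shortest
`u`-`r` path meets the landmark set `R` only in `r`. -/
def LEntry (G : SimpleGraph V) (R : Set V) (u r : V) : Prop :=
  ∃ w : G.Walk u r, w.length = G.dist u r ∧ ∀ x ∈ w.support, x ∈ R → x = r

/-- `(r, r')` is an edge of the meta-graph `M`: some shortest `r`-`r'` path in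
`G` contains no landmark other than `r` and `r'`. Its weight is `d_G(r,r')`. -/
def MEdge (G : SimpleGraph V) (R : Set V) (r r' : V) : Prop :=
  r ≠ r' ∧ ∃ w : G.Walk r r', w.length = G.dist r r' ∧
    ∀ x ∈ w.support, x ∈ R → x = r ∨ x = r'

/-- There is a walk in the weighted meta-graph from `r` to `r'` of total
weight `n` (each meta-edge `(s,s')` having weight `d_G(s,s')`). -/
inductive MWalkLen (G : SimpleGraph V) (R : Set V) : V → V → ℕ → Prop
  | nil (r : V) : MWalkLen G R r r 0
  | cons {r r' r'' : V} {n : ℕ} (h : MEdge G R r r') (hw : MWalkLen G R r' r'' n) :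
      MWalkLen G R r r'' (G.dist r r' + n)

/-- Weighted shortest-path distance `d_M` in the meta-graph (`⊤` if unreachable). -/
noncomputable def dM (G : SimpleGraph V) (R : Set V) (r r' : V) : ℕ∞ :=
  sInf {x : ℕ∞ | ∃ n : ℕ, MWalkLen G R r r' n ∧ x = (n : ℕ∞)}

/-- The sketch upper bound
`d⊤_uv = min {δ_ur + d_M(r,r') + δ_vr' : (r,δ_ur) ∈ L(u), (r',δ_vr') ∈ L(v)}`. -/
noncomputable def dTop (G : SimpleGraph V) (R : Set V) (u v : V) : ℕ∞ :=
  sInf {x : ℕ∞ | ∃ r r', r ∈ R ∧ r' ∈ R ∧ LEntry G R u r ∧ LEntry G R v r' ∧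
    x = (G.dist u r : ℕ∞) + dM G R r r' + (G.dist v r' : ℕ∞)}

/-!
Every `u`-`v` walk in `G⁻`, and every candidate `d_G(u,r) + d_M(r,r') + d_G(r',v)` of `d⊤`,
is the length of a `u`-`v` walk in `G`, so `d_G(u,v)` is at most the minimum. Conversely, a
shortest `u`-`v` walk either avoids `R`, and then lives in `G⁻`, or it meets `R`. In the latter
case, cutting it at its first landmark `r` and its last landmark `r'` yields the label entries
`(r, d_G(u,r)) ∈ L(u)` and `(r', d_G(v,r')) ∈ L(v)`, and the middle piece, split at its inner
landmarks, is a meta-walk, so `d_M(r,r') = d_G(r,r')`.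
-/

namespace MWalkLen

variable {G : SimpleGraph V} {R : Set V}

lemma append {a b c : V} {m k : ℕ} (h₁ : MWalkLen G R a b m) (h₂ : MWalkLen G R b c k) :
    MWalkLen G R a c (m + k) := by
  induction h₁ with
  | nil => simpa using h₂
  | cons h _ ih => rw [add_assoc]; exact cons h (ih h₂)

lemma dist_le {a b : V} {n : ℕ} (h : MWalkLen G R a b n) : G.dist a b ≤ n := by
  induction h with
  | nil => simp
  | @cons r r' r'' n h _ ih =>
    calc G.dist r r'' ≤ G.dist r r' + G.dist r' r'' :=
          h.2.choose.reachable.dist_triangle_left r''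
      _ ≤ G.dist r r' + n := by omega

lemma of_reachable {r r' : V} (h : G.Reachable r r') : MWalkLen G R r r' (G.dist r r') := by
  classical
  induction hn : G.dist r r' using Nat.strong_induction_on generalizing r r' with
  | _ n ih =>
  obtain ⟨w, hw⟩ := h.exists_walk_length_eq_dist
  by_cases hmid : ∃ x ∈ w.support, x ∈ R ∧ x ≠ r ∧ x ≠ r'
  · obtain ⟨x, hx, -, hxr, hxr'⟩ := hmid
    have e₁ := length_eq_dist_of_subwalk hw (w.isSubwalk_takeUntil hx)
    have e₂ := length_eq_dist_of_subwalk hw (w.isSubwalk_dropUntil hx)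
    have hsum : G.dist r x + G.dist x r' = n := by
      rw [← e₁, ← e₂, ← Walk.length_append, Walk.take_spec, hw, hn]
    have p₁ := (w.takeUntil x hx).reachable.pos_dist_of_ne hxr.symm
    have p₂ := (w.dropUntil x hx).reachable.pos_dist_of_ne hxr'
    rw [← hsum]
    exact (ih _ (by omega) (w.takeUntil x hx).reachable rfl).append
      (ih _ (by omega) (w.dropUntil x hx).reachable rfl)
  · rw [← hn]
    by_cases hrr : r = r'
    · subst hrr
      simpa using nil r
    push Not at hmid
    have hedge : MEdge G R r r' := ⟨hrr, w, hw, fun x hx hxR => by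
      by_contra! hne
      exact hne.2 (hmid x hx hxR hne.1)⟩
    exact cons hedge (nil r')

end MWalkLen

lemma dM_eq_dist {G : SimpleGraph V} {R : Set V} {r r' : V} (h : G.Reachable r r') :
    dM G R r r' = G.dist r r' :=
  le_antisymm (sInf_le ⟨_, .of_reachable h, rfl⟩)
    (le_sInf fun _ ⟨_, hn, hx⟩ => hx ▸ by exact_mod_cast hn.dist_le)

namespace SimpleGraph

variable {W : Type} {G : SimpleGraph V}

lemma Hom.dist_le_edist {G' : SimpleGraph W} (f : G →g G') (a b : V) :
    (G'.dist (f a) (f b) : ℕ∞) ≤ G.edist a b := by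
  by_cases h : G.Reachable a b
  · obtain ⟨p, hp⟩ := h.exists_walk_length_eq_edist
    rw [← hp, ← Walk.length_map f]
    exact_mod_cast dist_le _
  · simp [edist_eq_top_of_not_reachable h]

lemma Walk.edist_induce_le_length {s : Set V} {u v : V} (w : G.Walk u v)
    (hw : ∀ x ∈ w.support, x ∈ s) :
    (G.induce s).edist ⟨u, hw _ w.start_mem_support⟩ ⟨v, hw _ w.end_mem_support⟩ ≤ w.length := by
  have := (w.induce s hw).length_map (Embedding.induce s).toHom
  rw [map_induce] at this
  exact this ▸ edist_le _

lemma Walk.exists_eq_append_first_mem {s : Set V} {u v : V} (w : G.Walk u v)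
    (hs : ∃ x ∈ w.support, x ∈ s) :
    ∃ r ∈ s, ∃ (w₁ : G.Walk u r) (w₂ : G.Walk r v),
      w = w₁.append w₂ ∧ ∀ x ∈ w₁.support, x ∈ s → x = r := by
  induction w with
  | @nil u =>
    obtain ⟨x, hx, hxs⟩ := hs
    rw [Walk.support_nil, List.mem_singleton] at hx
    exact ⟨u, hx ▸ hxs, .nil, .nil, rfl, by simp⟩
  | @cons u u' v h p ih =>
    by_cases hu : u ∈ s
    · exact ⟨u, hu, .nil, .cons h p, rfl, by simp⟩
    have hp : ∃ x ∈ p.support, x ∈ s := by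
      obtain ⟨x, hx, hxs⟩ := hs
      rw [Walk.support_cons, List.mem_cons] at hx
      exact ⟨x, hx.resolve_left (by rintro rfl; exact hu hxs), hxs⟩
    obtain ⟨r, hr, w₁, w₂, rfl, hw₁⟩ := ih hp
    refine ⟨r, hr, .cons h w₁, w₂, rfl, fun x hx hxs => ?_⟩
    rw [Walk.support_cons, List.mem_cons] at hx
    exact hx.elim (by rintro rfl; exact absurd hxs hu) (hw₁ x · hxs)

end SimpleGraph

section sketch

variable {G : SimpleGraph V} {R : Set V} {u v : V}

lemma dist_le_dTop (huv : G.Reachable u v) : (G.dist u v : ℕ∞) ≤ dTop G R u v := by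
  refine le_sInf ?_
  rintro _ ⟨r, r', -, -, ⟨w₁, -, -⟩, ⟨w₂, -, -⟩, rfl⟩
  have hrr' : G.Reachable r r' := w₁.reachable.symm.trans (huv.trans w₂.reachable)
  have htri : G.dist u v ≤ G.dist u r + G.dist r r' + G.dist v r' :=
    calc G.dist u v ≤ G.dist u r + G.dist r v := w₁.reachable.dist_triangle_left v
      _ ≤ G.dist u r + (G.dist r r' + G.dist r' v) := by
          gcongr; exact hrr'.dist_triangle_left v
      _ = G.dist u r + G.dist r r' + G.dist v r' := by rw [dist_comm (u := r'), add_assoc]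
  rw [dM_eq_dist hrr']
  exact_mod_cast htri

lemma dTop_le_dist_of_walk (w : G.Walk u v) (hw : w.length = G.dist u v)
    (hR : ∃ x ∈ w.support, x ∈ R) : dTop G R u v ≤ G.dist u v := by
  obtain ⟨r, hr, w₁, w₂, rfl, hw₁⟩ := w.exists_eq_append_first_mem hR
  obtain ⟨r', hr', w₃, w₄, h₃₄, hw₃⟩ :=
    w₂.reverse.exists_eq_append_first_mem ⟨r, w₂.reverse.end_mem_support, hr⟩
  have e₁ := length_eq_dist_of_subwalk hw (Walk.isSubwalk_of_append_left rfl)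
  have e₂ : w₂.reverse.length = G.dist v r := by
    rw [Walk.length_reverse, dist_comm]
    exact length_eq_dist_of_subwalk hw (Walk.isSubwalk_of_append_right rfl)
  have e₃ := length_eq_dist_of_subwalk e₂ (Walk.isSubwalk_of_append_left h₃₄)
  have e₄ := length_eq_dist_of_subwalk e₂ (Walk.isSubwalk_of_append_right h₃₄)
  have hlen : G.dist u r + G.dist r r' + G.dist v r' = G.dist u v := by
    rw [← hw, Walk.length_append, ← Walk.length_reverse w₂, h₃₄, Walk.length_append,
      ← e₁, e₃, e₄, dist_comm (u := r')]
    ring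
  calc dTop G R u v ≤ G.dist u r + dM G R r r' + G.dist v r' :=
        sInf_le ⟨r, r', hr, hr', ⟨w₁, e₁, hw₁⟩, ⟨w₃, e₃, hw₃⟩, rfl⟩
    _ = G.dist u v := by
        rw [dM_eq_dist w₄.reachable.symm, ← hlen]
        push_cast
        rfl

end sketch

/-- `d_G(u,v) = min(d_{G⁻}(u,v), d⊤_uv)` where `G⁻ = G[V \ R]`. -/
theorem dist_eq_min_dMinus_dTop (G : SimpleGraph V) (hG : G.Connected)
    (R : Set V) (u v : V) (hu : u ∉ R) (hv : v ∉ R) :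
    (G.dist u v : ℕ∞) =
      min ((G.induce {x | x ∉ R}).edist ⟨u, hu⟩ ⟨v, hv⟩) (dTop G R u v) := by
  refine le_antisymm (le_min ?_ (dist_le_dTop (hG u v))) ?_
  · exact (Embedding.induce {x | x ∉ R}).toHom.dist_le_edist ⟨u, hu⟩ ⟨v, hv⟩
  obtain ⟨w, hw⟩ := hG.exists_walk_length_eq_dist u v
  by_cases hR : ∃ x ∈ w.support, x ∈ R
  · exact min_le_of_right_le (dTop_le_dist_of_walk w hw hR)
  · push Not at hR
    exact min_le_of_left_le (hw ▸ w.edist_induce_le_length hR)
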